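/- Let F' be a good Q-subtree of a tree-graded space F and let t belong to the closure of F' in F. Then F' ∪ {t} is also a good Q-subtree of F. -/

import Mathlib

/-- A map `γ` is a geodesic (unit-speed) on the interval `[a,b]`. -/
def IsGeodesicOn {F : Type*} [MetricSpace F] (γ : ℝ → F) (a b : ℝ) : Prop :=
  ∀ s ∈ Set.Icc a b, ∀ t ∈ Set.Icc a b, dist (γ s) (γ t) = |s - t|

/-- A metric space is geodesic if every two points are joined by a geodesic. -/
def GeodesicSpace (F : Type*) [MetricSpace F] : Prop :=
  ∀ x y : F, ∃ γ : ℝ → F, γ 0 = x ∧ γ (dist x y) = y ∧ IsGeodesicOn γ 0 (dist x y)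

/-- A subset is geodesic: any two of its points are joined by a geodesic inside it. -/
def GeodesicSubset {F : Type*} [MetricSpace F] (p : Set F) : Prop :=
  ∀ x ∈ p, ∀ y ∈ p, ∃ γ : ℝ → F, γ 0 = x ∧ γ (dist x y) = y ∧
    IsGeodesicOn γ 0 (dist x y) ∧ γ '' Set.Icc 0 (dist x y) ⊆ p

/-- A nontrivial simple geodesic triangle: a simple loop `γ` on `[0,L]` composed of three
geodesics `[0,a]`, `[a,b]`, `[b,L]`. -/
structure SimpleGeodesicTriangle {F : Type*} [MetricSpace F]
    (γ : ℝ → F) (a b L : ℝ) : Prop where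
  L_pos : 0 < L
  ha : 0 ≤ a
  hab : a ≤ b
  hbL : b ≤ L
  side1 : IsGeodesicOn γ 0 a
  side2 : IsGeodesicOn γ a b
  side3 : IsGeodesicOn γ b L
  closed : γ 0 = γ L
  simple : Set.InjOn γ (Set.Ico 0 L)

/-- `F` is tree-graded with respect to the collection `P` of pieces. -/
structure IsTreeGraded {F : Type*} [MetricSpace F] (P : Set (Set F)) : Prop where
  pieces_nonempty : ∀ p ∈ P, p.Nonempty
  pieces_closed : ∀ p ∈ P, IsClosed p
  pieces_geodesic : ∀ p ∈ P, GeodesicSubset p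
  T1 : ∀ p ∈ P, ∀ q ∈ P, p ≠ q → (p ∩ q).Subsingleton
  T2 : ∀ (γ : ℝ → F) (a b L : ℝ), SimpleGeodesicTriangle γ a b L →
    ∃ p ∈ P, γ '' Set.Icc 0 L ⊆ p

/-- `γ` is a geodesic from `s` to `x` lying in `C ∪ {s}`. -/
def IsGeodesicFromTo {F : Type*} [MetricSpace F] (γ : ℝ → F) (s x : F) (C : Set F) : Prop :=
  γ 0 = s ∧ γ (dist s x) = x ∧ IsGeodesicOn γ 0 (dist s x) ∧
    γ '' Set.Icc 0 (dist s x) ⊆ C ∪ {s}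

/-- The set of connected components of `F \ {s}`. -/
def componentsOff {F : Type*} [MetricSpace F] (s : F) : Set (Set F) :=
  {C | ∃ y : F, y ≠ s ∧ C = connectedComponentIn ({s}ᶜ : Set F) y}

/-- A component `C` of `F \ {s}` is non-limit if some piece intersects every geodesic
from `s` into `C ∪ {s}` in a nontrivial initial subsegment. -/
def IsNonLimitComponent {F : Type*} [MetricSpace F] (P : Set (Set F)) (s : F)
    (C : Set F) : Prop :=
  ∃ p ∈ P, ∀ x ∈ C, ∀ γ : ℝ → F, IsGeodesicFromTo γ s x C →
    ∃ u : ℝ, 0 < u ∧ u ≤ dist s x ∧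
      p ∩ γ '' Set.Icc 0 (dist s x) = γ '' Set.Icc 0 u

/-- `F'` is a `Q`-subtree of the tree-graded space `(F, P)`. -/
def IsQSubtree {F : Type*} [MetricSpace F] (P : Set (Set F)) (F' : Set F) : Prop :=
  IsPathConnected F' ∧ ∀ p ∈ P, (∃ a ∈ p ∩ F', ∃ b ∈ p ∩ F', a ≠ b) → p ⊆ F'

/-- `t` is a point of type I for `F'`: `F'` meets every connected component of
`F \ {t}`. -/
def TypeI {F : Type*} [MetricSpace F] (F' : Set F) (t : F) : Prop :=
  ∀ C ∈ componentsOff t, (F' ∩ C).Nonempty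

/-- `t` is a point of type II for `F'`: `F'` meets nontrivially at most `2` limit
connected components of `F \ {t}` and at most `2` pieces containing `t`. -/
def TypeII {F : Type*} [MetricSpace F] (P : Set (Set F)) (F' : Set F) (t : F) : Prop :=
  {C | C ∈ componentsOff t ∧ ¬ IsNonLimitComponent P t C ∧ (F' ∩ C).Nonempty}.encard ≤ 2 ∧
  {p | p ∈ P ∧ t ∈ p ∧ ∃ z ∈ F' ∩ p, z ≠ t}.encard ≤ 2

/-- A good `Q`-subtree: every point of it is of type I or of type II. -/
def IsGoodQSubtree {F : Type*} [MetricSpace F] (P : Set (Set F)) (F' : Set F) : Prop :=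
  IsQSubtree P F' ∧ ∀ t ∈ F', TypeI F' t ∨ TypeII P F' t


/-!
If `t ∈ F'` there is nothing to prove. Otherwise the heart of the matter is that no piece `q`
through `t` meets `F'`: a geodesic joining two points of a Q-subtree stays inside it, and the
geodesic from a point `e ∈ F' ∩ q` to a point `y ∈ F'` much closer to `t` than `e` is would have
to start inside `q`, so that `q` meets `F'` twice and hence `t ∈ q ⊆ F'`. Granting this, a
geodesic from `F'` to `t` stays in `F' ∪ {t}`; a component of `F \ {s}` meeting `t` is open and so
meets `F'`; and at `t` itself, the connected set `F'` lies in a single component of `F \ {t}`.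

The geometric input is the cut-point property of geodesics in a tree-graded space: if `σ u` can be
avoided by a chain of steps from `σ 0` to `σ l`, each shorter than the distance of its origin to
`σ u`, then `σ` runs through a piece on an interval around `u`. This is proved by induction on the
chain; the base case and the induction step both reduce, via first and last hitting times, to the
axiom that a simple geodesic triangle lies in a single piece.
-/

open Set Metric Relation Topology

section TreeGraded

variable {F : Type*} [MetricSpace F]

namespace IsGeodesicOn

variable {γ : ℝ → F} {a b l : ℝ}

theorem injOn (hγ : IsGeodesicOn γ a b) : InjOn γ (Icc a b) := fun s hs t ht h => by
  have := hγ s hs t ht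
  rwa [h, dist_self, eq_comm, abs_eq_zero, sub_eq_zero] at this

theorem dist_eq (hγ : IsGeodesicOn γ 0 l) {s : ℝ} (hs : s ∈ Icc 0 l) : dist (γ 0) (γ s) = s := by
  rw [hγ 0 (left_mem_Icc.2 (hs.1.trans hs.2)) s hs, zero_sub, abs_neg, abs_of_nonneg hs.1]

theorem continuousOn (hγ : IsGeodesicOn γ a b) : ContinuousOn γ (Icc a b) :=
  (LipschitzOnWith.of_dist_le_mul (K := 1) fun s hs t ht => by
    rw [hγ s hs t ht, NNReal.coe_one, one_mul, Real.dist_eq]).continuousOn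

theorem mono (hγ : IsGeodesicOn γ a b) {a' b' : ℝ} (ha : a ≤ a') (hb : b' ≤ b) :
    IsGeodesicOn γ a' b' := fun s hs t ht =>
  hγ s ⟨ha.trans hs.1, hs.2.trans hb⟩ t ⟨ha.trans ht.1, ht.2.trans hb⟩

theorem congr (hγ : IsGeodesicOn γ a b) {γ' : ℝ → F} (h : EqOn γ γ' (Icc a b)) :
    IsGeodesicOn γ' a b := fun s hs t ht => by
  rw [← h hs, ← h ht]
  exact hγ s hs t ht

theorem translate (hγ : IsGeodesicOn γ 0 l) (c : ℝ) :
    IsGeodesicOn (fun s => γ (s - c)) c (c + l) := fun s hs t ht => by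
  rw [hγ _ ⟨by linarith [hs.1], by linarith [hs.2]⟩ _ ⟨by linarith [ht.1], by linarith [ht.2]⟩,
    sub_sub_sub_cancel_right]

theorem shift (hγ : IsGeodesicOn γ 0 l) {c l' : ℝ} (hc : 0 ≤ c) (hl' : c + l' ≤ l) :
    IsGeodesicOn (fun s => γ (c + s)) 0 l' := fun s hs t ht => by
  rw [hγ _ ⟨by linarith [hs.1], by linarith [hs.2]⟩ _ ⟨by linarith [ht.1], by linarith [ht.2]⟩,
    add_sub_add_left_eq_sub]

theorem reverse (hγ : IsGeodesicOn γ 0 l) {c l' : ℝ} (hc : c ≤ l) (hl' : l' ≤ c) :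
    IsGeodesicOn (fun s => γ (c - s)) 0 l' := fun s hs t ht => by
  rw [hγ _ ⟨by linarith [hs.2], by linarith [hs.1]⟩ _ ⟨by linarith [ht.2], by linarith [ht.1]⟩,
    sub_sub_sub_cancel_left, abs_sub_comm]

theorem ne_of_lt_dist (hγ : IsGeodesicOn γ 0 l) {m : F} (hm : l < dist (γ 0) m) {s : ℝ}
    (hs : s ∈ Icc 0 l) : γ s ≠ m := fun h => by
  have := hγ.dist_eq hs
  rw [h] at this
  linarith [hs.2]

theorem joinedIn (hγ : IsGeodesicOn γ 0 l) (hl : 0 ≤ l) {S : Set F} (hS : γ '' Icc 0 l ⊆ S) :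
    JoinedIn S (γ 0) (γ l) :=
  ((convex_Icc 0 l).isPathConnected (nonempty_Icc.2 hl) |>.image' hγ.continuousOn |>.joinedIn
    _ (mem_image_of_mem γ (left_mem_Icc.2 hl)) _ (mem_image_of_mem γ (right_mem_Icc.2 hl))).mono hS

end IsGeodesicOn

theorem locallyPathConnectedSpace_of_geodesicSpace (hF : GeodesicSpace F) :
    LocallyPathConnectedSpace F := by
  refine LocallyPathConnectedSpace.of_bases (fun x => nhds_basis_ball) fun x ε hε =>
    ⟨x, mem_ball_self hε, fun y hy => ?_⟩
  obtain ⟨γ, h0, h1, hγ⟩ := hF x y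
  have hball : γ '' Icc 0 (dist x y) ⊆ ball x ε := by
    rintro _ ⟨s, hs, rfl⟩
    rw [mem_ball, dist_comm, ← h0, hγ.dist_eq hs]
    exact hs.2.trans_lt (by rwa [mem_ball, dist_comm] at hy)
  simpa only [h0, h1] using hγ.joinedIn dist_nonneg hball

theorem reflTransGen_dist_lt_of_isPreconnected {S : Set F} (hS : IsPreconnected S) {m x y : F}
    (hm : m ∉ S) (hx : x ∈ S) (hy : y ∈ S) :
    ReflTransGen (fun a b => dist a b < dist a m) x y := by
  refine hS.induction₂' _ (fun a ha => ?_) (fun _ _ _ _ _ _ => ReflTransGen.trans) hx hy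
  have hpos : 0 < dist a m := dist_pos.2 fun h => hm (h ▸ ha)
  have h₁ : ∀ᶠ b in 𝓝 a, dist a b < dist a m :=
    (continuousAt_const.dist continuousAt_id).eventually_lt continuousAt_const
      (by rwa [id, dist_self])
  have h₂ : ∀ᶠ b in 𝓝 a, dist b a < dist b m :=
    (continuousAt_id.dist continuousAt_const).eventually_lt
      (continuousAt_id.dist continuousAt_const) (by rwa [id, dist_self])
  exact nhdsWithin_le_nhds ((h₁.and h₂).mono fun b hb => ⟨.single hb.1, .single hb.2⟩)

section Reparametrization

variable {X : Type*}

theorem image_comp_const_add_Icc (γ : ℝ → X) (c a b : ℝ) :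
    (fun s => γ (c + s)) '' Icc a b = γ '' Icc (c + a) (c + b) := by
  rw [← image_const_add_Icc, image_image]

theorem image_comp_const_sub_Icc (γ : ℝ → X) (c a b : ℝ) :
    (fun s => γ (c - s)) '' Icc a b = γ '' Icc (c - b) (c - a) := by
  have : (fun s => c - s) '' Icc a b = Icc (c - b) (c - a) := by
    ext x
    exact ⟨fun ⟨s, hs, hx⟩ => ⟨by linarith [hs.2], by linarith [hs.1]⟩,
      fun hx => ⟨c - x, ⟨by linarith [hx.2], by linarith [hx.1]⟩, sub_sub_cancel c x⟩⟩
  rw [← this, image_image]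

variable [TopologicalSpace X] {γ : ℝ → X} {a b : ℝ} {J : Set X}

theorem ContinuousOn.exists_greatest_mem_preimage (hγ : ContinuousOn γ (Icc a b))
    (hJ : IsClosed J) (hne : ∃ s ∈ Icc a b, γ s ∈ J) :
    ∃ s ∈ Icc a b, γ s ∈ J ∧ ∀ r ∈ Icc a b, γ r ∈ J → r ≤ s := by
  obtain ⟨s, ⟨hs, hsJ⟩, hmax⟩ := (isCompact_Icc.of_isClosed_subset
    (hγ.preimage_isClosed_of_isClosed isClosed_Icc hJ) inter_subset_left).exists_isGreatest hne
  exact ⟨s, hs, hsJ, fun r hr hrJ => hmax ⟨hr, hrJ⟩⟩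

theorem ContinuousOn.exists_least_mem_preimage (hγ : ContinuousOn γ (Icc a b))
    (hJ : IsClosed J) (hne : ∃ s ∈ Icc a b, γ s ∈ J) :
    ∃ s ∈ Icc a b, γ s ∈ J ∧ ∀ r ∈ Icc a b, γ r ∈ J → s ≤ r := by
  obtain ⟨s, ⟨hs, hsJ⟩, hmin⟩ := (isCompact_Icc.of_isClosed_subset
    (hγ.preimage_isClosed_of_isClosed isClosed_Icc hJ) inter_subset_left).exists_isLeast hne
  exact ⟨s, hs, hsJ, fun r hr hrJ => hmin ⟨hr, hrJ⟩⟩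

theorem ContinuousOn.exists_gap (hγ : ContinuousOn γ (Icc a b)) (hJ : IsClosed J)
    (ha : γ a ∈ J) (hb : γ b ∈ J) {u : ℝ} (hu : u ∈ Icc a b) (huJ : γ u ∉ J) :
    ∃ a' b', a ≤ a' ∧ a' < u ∧ u < b' ∧ b' ≤ b ∧ γ a' ∈ J ∧ γ b' ∈ J ∧
      ∀ s ∈ Ioo a' b', γ s ∉ J := by
  obtain ⟨a', ha', ha'J, hmax⟩ := (hγ.mono (Icc_subset_Icc_right hu.2)).exists_greatest_mem_preimage
    hJ ⟨a, left_mem_Icc.2 hu.1, ha⟩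
  obtain ⟨b', hb', hb'J, hmin⟩ := (hγ.mono (Icc_subset_Icc_left hu.1)).exists_least_mem_preimage
    hJ ⟨b, right_mem_Icc.2 hu.2, hb⟩
  have hau : a' < u := ha'.2.lt_of_ne fun h => huJ (h ▸ ha'J)
  have hub : u < b' := hb'.1.lt_of_ne fun h => huJ (h ▸ hb'J)
  refine ⟨a', b', ha'.1, hau, hub, hb'.2, ha'J, hb'J, fun s hs hsJ => ?_⟩
  rcases le_total s u with hsu | hus
  · linarith [hmax s ⟨by linarith [hs.1, ha'.1], hsu⟩ hsJ, hs.1]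
  · linarith [hmin s ⟨hus, by linarith [hs.2, hb'.2]⟩ hsJ, hs.2]

end Reparametrization

section Concat

variable {X : Type*}

noncomputable def concatAt (f g : ℝ → X) (l : ℝ) (s : ℝ) : X :=
  if s < l then f s else g (s - l)

variable {f g : ℝ → X} {l l' s : ℝ}

theorem concatAt_of_le (hfg : f l = g 0) (hs : s ≤ l) : concatAt f g l s = f s := by
  unfold concatAt
  split_ifs with h
  · rfl
  · rw [le_antisymm hs (not_lt.1 h), sub_self, hfg]

theorem concatAt_of_ge (hs : l ≤ s) : concatAt f g l s = g (s - l) :=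
  if_neg (not_lt.2 hs)

theorem concatAt_image_Ico_subset :
    concatAt f g l '' Ico 0 (l + l') ⊆ f '' Ico 0 l ∪ g '' Ico 0 l' := by
  rintro _ ⟨s, hs, rfl⟩
  rcases lt_or_ge s l with h | h
  · exact Or.inl ⟨s, ⟨hs.1, h⟩, (if_pos h).symm⟩
  · exact Or.inr ⟨s - l, ⟨by linarith, by linarith [hs.2]⟩, (concatAt_of_ge h).symm⟩

theorem injOn_concatAt (hf : InjOn f (Ico 0 l)) (hg : InjOn g (Ico 0 l'))
    (hfg : Disjoint (f '' Ico 0 l) (g '' Ico 0 l')) : InjOn (concatAt f g l) (Ico 0 (l + l')) := by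
  have key : ∀ s ∈ Ico 0 (l + l'), (s < l ∧ concatAt f g l s = f s) ∨
      (s - l ∈ Ico 0 l' ∧ concatAt f g l s = g (s - l)) := fun s hs => by
    rcases lt_or_ge s l with h | h
    · exact Or.inl ⟨h, if_pos h⟩
    · exact Or.inr ⟨⟨by linarith, by linarith [hs.2]⟩, concatAt_of_ge h⟩
  intro s hs r hr he
  rcases key s hs with ⟨hsl, es⟩ | ⟨hsl, es⟩ <;> rcases key r hr with ⟨hrl, er⟩ | ⟨hrl, er⟩
  · exact hf ⟨hs.1, hsl⟩ ⟨hr.1, hrl⟩ (es ▸ er ▸ he)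
  · exact (disjoint_left.1 hfg ⟨s, ⟨hs.1, hsl⟩, rfl⟩ ⟨r - l, hrl, (es ▸ er ▸ he).symm⟩).elim
  · exact (disjoint_left.1 hfg ⟨r, ⟨hr.1, hrl⟩, rfl⟩ ⟨s - l, hsl, es ▸ er ▸ he⟩).elim
  · exact sub_left_inj.1 (hg hsl hrl (es ▸ er ▸ he))

end Concat

section CrossesPiece

variable {X : Type*}

def CrossesPieceAt (P : Set (Set X)) (σ : ℝ → X) (l u : ℝ) : Prop :=
  ∃ Q ∈ P, ∃ a b, 0 ≤ a ∧ a < u ∧ u < b ∧ b ≤ l ∧ σ '' Icc a b ⊆ Q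

theorem CrossesPieceAt.reverse {P : Set (Set X)} {σ : ℝ → X} {l b : ℝ}
    (h : CrossesPieceAt P σ l b) : CrossesPieceAt P (fun s => σ (l - s)) l (l - b) := by
  obtain ⟨Q, hQ, a', b', ha', hab, hbb, hbl, hsub⟩ := h
  exact ⟨Q, hQ, l - b', l - a', by linarith, by linarith, by linarith, by linarith,
    by rwa [image_comp_const_sub_Icc, sub_sub_cancel, sub_sub_cancel]⟩

end CrossesPiece

namespace IsTreeGraded

variable {P : Set (Set F)}

theorem eq_of_mem_inter (hTG : IsTreeGraded P) {p q : Set F} (hp : p ∈ P) (hq : q ∈ P)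
    {x y : F} (hxy : x ≠ y) (hx : x ∈ p ∩ q) (hy : y ∈ p ∩ q) : p = q := by
  by_contra h
  exact hxy (hTG.T1 p hp q hq h hx hy)

theorem exists_piece_of_loop (hTG : IsTreeGraded P) {f g h : ℝ → F} {l₁ l₂ l₃ : ℝ}
    (hf : IsGeodesicOn f 0 l₁) (hg : IsGeodesicOn g 0 l₂) (hh : IsGeodesicOn h 0 l₃)
    (h₁ : 0 ≤ l₁) (h₂ : 0 ≤ l₂) (h₃ : 0 ≤ l₃) (hpos : 0 < l₁ + l₂ + l₃)
    (hfg : f l₁ = g 0) (hgh : g l₂ = h 0) (hhf : h l₃ = f 0)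
    (dfg : Disjoint (f '' Ico 0 l₁) (g '' Ico 0 l₂))
    (dgh : Disjoint (g '' Ico 0 l₂) (h '' Ico 0 l₃))
    (dfh : Disjoint (f '' Ico 0 l₁) (h '' Ico 0 l₃)) :
    ∃ p ∈ P, f '' Icc 0 l₁ ⊆ p ∧ g '' Icc 0 l₂ ⊆ p ∧ h '' Icc 0 l₃ ⊆ p := by
  set γ := concatAt (concatAt f g l₁) h (l₁ + l₂) with hγ
  have hend : concatAt f g l₁ (l₁ + l₂) = h 0 := by
    rw [concatAt_of_ge (by linarith), add_sub_cancel_left, hgh]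
  have e₁ : ∀ s ≤ l₁, γ s = f s := fun s hs => by
    rw [hγ, concatAt_of_le hend (by linarith), concatAt_of_le hfg hs]
  have e₂ : ∀ s, l₁ ≤ s → s ≤ l₁ + l₂ → γ s = g (s - l₁) := fun s hs hs' => by
    rw [hγ, concatAt_of_le hend hs', concatAt_of_ge hs]
  have e₃ : ∀ s, l₁ + l₂ ≤ s → γ s = h (s - (l₁ + l₂)) := fun s hs => concatAt_of_ge hs
  have htri : SimpleGeodesicTriangle γ l₁ (l₁ + l₂) (l₁ + l₂ + l₃) :=
    { L_pos := hpos, ha := h₁, hab := by linarith, hbL := by linarith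
      side1 := hf.congr fun s hs => (e₁ s hs.2).symm
      side2 := (hg.translate l₁).congr fun s hs => (e₂ s hs.1 hs.2).symm
      side3 := (hh.translate (l₁ + l₂)).congr fun s hs => (e₃ s hs.1).symm
      closed := by rw [e₁ 0 h₁, e₃ _ (by linarith), add_sub_cancel_left, hhf]
      simple := injOn_concatAt
        (injOn_concatAt (hf.injOn.mono Ico_subset_Icc_self) (hg.injOn.mono Ico_subset_Icc_self) dfg)
        (hh.injOn.mono Ico_subset_Icc_self)
        ((dfh.union_left dgh).mono_left concatAt_image_Ico_subset) }
  obtain ⟨p, hp, hsub⟩ := hTG.T2 γ _ _ _ htri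
  refine ⟨p, hp, ?_, ?_, ?_⟩ <;> rintro _ ⟨s, hs, rfl⟩
  · exact hsub ⟨s, ⟨hs.1, by linarith [hs.2]⟩, e₁ s hs.2⟩
  · refine hsub ⟨l₁ + s, ⟨by linarith [hs.1], by linarith [hs.2]⟩, ?_⟩
    rw [e₂ _ (by linarith [hs.1]) (by linarith [hs.2]), add_sub_cancel_left]
  · refine hsub ⟨l₁ + l₂ + s, ⟨by linarith [hs.1], by linarith [hs.2]⟩, ?_⟩
    rw [e₃ _ (by linarith [hs.1]), add_sub_cancel_left]

theorem exists_piece_of_bigon (hTG : IsTreeGraded P) {f g : ℝ → F} {l l' : ℝ}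
    (hf : IsGeodesicOn f 0 l) (hg : IsGeodesicOn g 0 l') (hl : 0 < l) (hl' : 0 ≤ l')
    (h0 : f 0 = g 0) (h1 : f l = g l') (hdisj : ∀ s ∈ Ioo 0 l, ∀ r ∈ Ioo 0 l', f s ≠ g r) :
    ∃ p ∈ P, f '' Icc 0 l ⊆ p ∧ g '' Icc 0 l' ⊆ p := by
  have dfg : Disjoint (f '' Ico 0 l) ((fun s => g (l' - s)) '' Ico 0 l') := by
    rw [disjoint_left]
    rintro _ ⟨s, hs, rfl⟩ ⟨r, hr, he⟩
    have hr' : l' - r ∈ Icc 0 l' := ⟨by linarith [hr.2], by linarith [hr.1]⟩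
    rcases hs.1.eq_or_lt with rfl | hs0
    · have := hg.injOn hr' (left_mem_Icc.2 hl') (he.trans h0)
      linarith [hr.2]
    rcases hr.1.eq_or_lt with rfl | hr0
    · simp only [sub_zero] at he
      have := hf.injOn ⟨hs.1, hs.2.le⟩ (right_mem_Icc.2 hl.le) (he.symm.trans h1.symm)
      linarith [hs.2]
    exact hdisj s ⟨hs0, hs.2⟩ (l' - r) ⟨by linarith [hr.2], by linarith⟩ he.symm
  obtain ⟨p, hp, hfp, hgp, -⟩ := hTG.exists_piece_of_loop hf (hg.reverse le_rfl le_rfl)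
    (fun s hs t ht => by simp [le_antisymm hs.2 hs.1, le_antisymm ht.2 ht.1])
    hl.le hl' le_rfl (by linarith) (by simpa using h1) (by simpa using h0.symm) rfl dfg
    (by simp) (by simp)
  refine ⟨p, hp, hfp, ?_⟩
  rwa [image_comp_const_sub_Icc, sub_zero, sub_self] at hgp

theorem exists_piece_of_triangle (hTG : IsTreeGraded P) {η β τ : ℝ → F} {a b c : ℝ}
    (hη : IsGeodesicOn η 0 a) (hβ : IsGeodesicOn β 0 b) (hτ : IsGeodesicOn τ 0 c)
    (ha : 0 ≤ a) (hb : 0 ≤ b) (hc : 0 < c) (h0 : η 0 = β 0) (hτ0 : τ 0 = η a) (hτ1 : τ c = β b)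
    (hηβ : ∀ s ∈ Ico 0 a, ∀ r ∈ Ioc 0 b, η s ≠ β r)
    (hτη : ∀ v ∈ Ioo 0 c, ∀ s ∈ Ico 0 a, τ v ≠ η s)
    (hτβ : ∀ v ∈ Ico 0 c, ∀ r ∈ Ioo 0 b, τ v ≠ β r) :
    ∃ p ∈ P, η '' Icc 0 a ⊆ p ∧ β '' Icc 0 b ⊆ p ∧ τ '' Icc 0 c ⊆ p := by
  have dητ : Disjoint (η '' Ico 0 a) (τ '' Ico 0 c) := disjoint_left.2 <| by
    rintro _ ⟨s, hs, rfl⟩ ⟨v, hv, he⟩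
    rcases hv.1.eq_or_lt with rfl | hv0
    · exact hs.2.ne (hη.injOn (Ico_subset_Icc_self hs) (right_mem_Icc.2 ha) (he.symm.trans hτ0))
    · exact hτη v ⟨hv0, hv.2⟩ s hs he
  have dτβ : Disjoint (τ '' Ico 0 c) ((fun r => β (b - r)) '' Ico 0 b) := disjoint_left.2 <| by
    rintro _ ⟨v, hv, rfl⟩ ⟨r, hr, he⟩
    rcases hr.1.eq_or_lt with rfl | hr0
    · exact hv.2.ne (hτ.injOn (Ico_subset_Icc_self hv) (right_mem_Icc.2 hc.le)
        (by simpa [hτ1] using he.symm))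
    · exact hτβ v hv (b - r) ⟨by linarith [hr.2], by linarith⟩ he.symm
  have dηβ : Disjoint (η '' Ico 0 a) ((fun r => β (b - r)) '' Ico 0 b) := disjoint_left.2 <| by
    rintro _ ⟨s, hs, rfl⟩ ⟨r, hr, he⟩
    exact hηβ s hs (b - r) ⟨by linarith [hr.2], by linarith [hr.1]⟩ he.symm
  obtain ⟨p, hp, hηp, hτp, hβp⟩ := hTG.exists_piece_of_loop hη hτ (hβ.reverse le_rfl le_rfl)
    ha hc.le hb (by linarith) hτ0.symm (by simpa using hτ1) (by simpa using h0.symm) dητ dτβ dηβ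
  rw [image_comp_const_sub_Icc, sub_zero, sub_self] at hβp
  exact ⟨p, hp, hηp, hβp, hτp⟩

theorem exists_piece_of_endpoints_mem (hTG : IsTreeGraded P) {σ τ : ℝ → F} {L lτ : ℝ}
    (hσ : IsGeodesicOn σ 0 L) (hτ : IsGeodesicOn τ 0 lτ) (hL : 0 < L)
    (h0 : σ 0 ∈ τ '' Icc 0 lτ) (h1 : σ L ∈ τ '' Icc 0 lτ)
    (hmiss : ∀ s ∈ Ioo 0 L, σ s ∉ τ '' Icc 0 lτ) : ∃ p ∈ P, σ '' Icc 0 L ⊆ p := by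
  suffices key : ∀ g : ℝ → F, ∀ lg, IsGeodesicOn g 0 lg → 0 ≤ lg → g 0 = σ 0 → g lg = σ L →
      g '' Icc 0 lg ⊆ τ '' Icc 0 lτ → ∃ p ∈ P, σ '' Icc 0 L ⊆ p by
    obtain ⟨ra, hra, hσa⟩ := h0
    obtain ⟨rb, hrb, hσb⟩ := h1
    rcases lt_trichotomy ra rb with hr | rfl | hr
    · refine key _ _ (hτ.shift (l' := rb - ra) hra.1 (by linarith [hrb.2])) (by linarith)
        (by simpa using hσa) (by simpa using hσb) ?_
      rw [image_comp_const_add_Icc, add_zero, add_sub_cancel]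
      exact image_mono (Icc_subset_Icc hra.1 hrb.2)
    · have := hσ.injOn (left_mem_Icc.2 hL.le) (right_mem_Icc.2 hL.le) (hσa.symm.trans hσb)
      linarith
    · refine key _ _ (hτ.reverse (l' := ra - rb) hra.2 (by linarith [hrb.1])) (by linarith)
        (by simpa using hσa) (by simpa using hσb) ?_
      rw [image_comp_const_sub_Icc, sub_zero, sub_sub_cancel]
      exact image_mono (Icc_subset_Icc hrb.1 hra.2)
  intro g lg hg hlg hg0 hg1 hgτ
  obtain ⟨p, hp, hσp, -⟩ := hTG.exists_piece_of_bigon hσ hg hL hlg hg0.symm hg1.symm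
    fun s hs r hr he => hmiss s hs (he ▸ hgτ (mem_image_of_mem g (Ioo_subset_Icc_self hr)))
  exact ⟨p, hp, hσp⟩

theorem exists_piece_of_endpoints_mem_of_join (hTG : IsTreeGraded P) {σ τ₀ τ₁ : ℝ → F}
    {L l₀ l₁ : ℝ} (hσ : IsGeodesicOn σ 0 L) (hτ₀ : IsGeodesicOn τ₀ 0 l₀)
    (hτ₁ : IsGeodesicOn τ₁ 0 l₁) (hL : 0 < L) (hjoin : τ₀ l₀ = τ₁ 0)
    (h0 : σ 0 ∈ τ₀ '' Icc 0 l₀) (h1 : σ L ∈ τ₁ '' Icc 0 l₁)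
    (hmiss : ∀ s ∈ Ioo 0 L, σ s ∉ τ₀ '' Icc 0 l₀ ∪ τ₁ '' Icc 0 l₁) :
    ∃ p ∈ P, σ '' Icc 0 L ⊆ p := by
  obtain ⟨ra, hra, hσa⟩ := h0
  obtain ⟨rb, hrb, hσb⟩ := h1
  -- cut the path `τ₀ [ra, l₀] ∪ τ₁ [0, rb]` at the last point `τ₁ s' = τ₀ r'` of `τ₁` on `τ₀`,
  -- leaving a geodesic triangle with vertex `τ₁ s'` and opposite side `σ`
  obtain ⟨s', hs', ⟨r', hr', hr's'⟩, hmax⟩ :=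
    (hτ₁.continuousOn.mono (Icc_subset_Icc_right hrb.2)).exists_greatest_mem_preimage
      ((isCompact_Icc.image_of_continuousOn
        (hτ₀.continuousOn.mono (Icc_subset_Icc_left hra.1))).isClosed)
      ⟨0, left_mem_Icc.2 hrb.1, l₀, right_mem_Icc.2 hra.2, hjoin⟩
  have hcut : ∀ s ∈ Icc s' rb, ∀ r ∈ Icc ra r', τ₁ s = τ₀ r → r = r' := fun s hs r hr he => by
    have hss' : s = s' := le_antisymm (hmax s ⟨hs'.1.trans hs.1, hs.2⟩
      ⟨r, ⟨hr.1, hr.2.trans hr'.2⟩, he.symm⟩) hs.1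
    exact hτ₀.injOn ⟨hra.1.trans hr.1, hr.2.trans hr'.2⟩ ⟨hra.1.trans hr'.1, hr'.2⟩
      (he.symm.trans (hss' ▸ hr's'.symm))
  obtain ⟨p, hp, -, -, hσp⟩ := hTG.exists_piece_of_triangle
    (hτ₁.shift (l' := rb - s') hs'.1 (by linarith [hrb.2]))
    (hτ₀.reverse (l' := r' - ra) hr'.2 (by linarith [hra.1])) (hσ.reverse le_rfl le_rfl)
    (by linarith [hs'.2]) (by linarith [hr'.1]) hL (by simpa using hr's'.symm)
    (by simpa using hσb.symm) (by simpa using hσa.symm)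
    (fun s hs r hr he => by
      have := hcut (s' + s) ⟨by linarith [hs.1], by linarith [hs.2]⟩ (r' - r)
        ⟨by linarith [hr.2], by linarith [hr.1]⟩ he
      linarith [hr.1])
    (fun v hv s hs he => hmiss (L - v) ⟨by linarith [hv.2], by linarith [hv.1]⟩
      (Or.inr ⟨s' + s, ⟨by linarith [hs.1, hs'.1], by linarith [hs.2, hrb.2]⟩, he.symm⟩))
    (fun v hv r hr he => by
      rcases hv.1.eq_or_lt with rfl | hv0
      · have := hcut rb ⟨hs'.2, le_rfl⟩ (r' - r) ⟨by linarith [hr.2], by linarith [hr.1]⟩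
          (hσb.trans (by simpa using he))
        linarith [hr.1]
      · exact hmiss (L - v) ⟨by linarith [hv.2], by linarith⟩
          (Or.inl ⟨r' - r, ⟨by linarith [hr.2, hra.1], by linarith [hr.1, hr'.2]⟩, he.symm⟩))
  rw [image_comp_const_sub_Icc, sub_zero, sub_self] at hσp
  exact ⟨p, hp, hσp⟩

theorem exists_piece_of_endpoints_mem_union (hTG : IsTreeGraded P) {σ τ₀ τ₁ : ℝ → F}
    {L l₀ l₁ : ℝ} (hσ : IsGeodesicOn σ 0 L) (hτ₀ : IsGeodesicOn τ₀ 0 l₀)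
    (hτ₁ : IsGeodesicOn τ₁ 0 l₁) (hL : 0 < L) (hjoin : τ₀ l₀ = τ₁ 0)
    (h0 : σ 0 ∈ τ₀ '' Icc 0 l₀ ∪ τ₁ '' Icc 0 l₁) (h1 : σ L ∈ τ₀ '' Icc 0 l₀ ∪ τ₁ '' Icc 0 l₁)
    (hmiss : ∀ s ∈ Ioo 0 L, σ s ∉ τ₀ '' Icc 0 l₀ ∪ τ₁ '' Icc 0 l₁) :
    ∃ p ∈ P, σ '' Icc 0 L ⊆ p := by
  rcases h0 with h0 | h0 <;> rcases h1 with h1 | h1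
  · exact hTG.exists_piece_of_endpoints_mem hσ hτ₀ hL h0 h1 fun s hs h => hmiss s hs (Or.inl h)
  · exact hTG.exists_piece_of_endpoints_mem_of_join hσ hτ₀ hτ₁ hL hjoin h0 h1 hmiss
  · have h := hTG.exists_piece_of_endpoints_mem_of_join (hσ.reverse le_rfl le_rfl) hτ₀ hτ₁ hL
      hjoin (by simpa using h1) (by simpa using h0)
      fun s hs => hmiss (L - s) ⟨by linarith [hs.2], by linarith [hs.1]⟩
    rwa [image_comp_const_sub_Icc, sub_zero, sub_self] at h
  · exact hTG.exists_piece_of_endpoints_mem hσ hτ₁ hL h0 h1 fun s hs h => hmiss s hs (Or.inr h)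

theorem crossesPieceAt_of_not_mem_union (hTG : IsTreeGraded P) {σ τ₀ τ₁ : ℝ → F}
    {l l₀ l₁ u : ℝ} (hσ : IsGeodesicOn σ 0 l) (hτ₀ : IsGeodesicOn τ₀ 0 l₀)
    (hτ₁ : IsGeodesicOn τ₁ 0 l₁) (hl₀ : 0 ≤ l₀) (hl₁ : 0 ≤ l₁)
    (h0 : τ₀ 0 = σ 0) (hjoin : τ₀ l₀ = τ₁ 0) (h1 : τ₁ l₁ = σ l) (hu : u ∈ Ioo 0 l)
    (hu₀ : σ u ∉ τ₀ '' Icc 0 l₀) (hu₁ : σ u ∉ τ₁ '' Icc 0 l₁) : CrossesPieceAt P σ l u := by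
  obtain ⟨a, b, ha, hau, hub, hbl, haJ, hbJ, hgap⟩ := hσ.continuousOn.exists_gap
    ((isCompact_Icc.image_of_continuousOn hτ₀.continuousOn).isClosed.union
      (isCompact_Icc.image_of_continuousOn hτ₁.continuousOn).isClosed)
    (Or.inl ⟨0, left_mem_Icc.2 hl₀, h0⟩) (Or.inr ⟨l₁, right_mem_Icc.2 hl₁, h1⟩)
    (Ioo_subset_Icc_self hu) (fun h => h.elim hu₀ hu₁)
  obtain ⟨p, hp, hsub⟩ := hTG.exists_piece_of_endpoints_mem_union (L := b - a)
    (hσ.shift ha (by linarith)) hτ₀ hτ₁ (by linarith) hjoin (by simpa using haJ)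
    (by simpa using hbJ) fun s hs => hgap (a + s) ⟨by linarith [hs.1], by linarith [hs.2]⟩
  rw [image_comp_const_add_Icc, add_zero, add_sub_cancel] at hsub
  exact ⟨p, hp, a, b, ha, hau, hub, hbl, hsub⟩

theorem image_subset_of_same_endpoints (hTG : IsTreeGraded P) {g h : ℝ → F} {l c : ℝ}
    (hg : IsGeodesicOn g 0 l) (hh : IsGeodesicOn h 0 l) (h0 : g 0 = h 0) (h1 : g l = h l)
    (hcl : c ≤ l) {Q : Set F} (hQ : Q ∈ P) (hhQ : h '' Icc 0 c ⊆ Q) :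
    g '' Icc 0 c ⊆ Q := by
  rintro _ ⟨s, hs, rfl⟩
  by_cases he : g s = h s
  · exact he ▸ hhQ (mem_image_of_mem h hs)
  -- on a maximal interval `(a, b) ∋ s` where `g ≠ h` the two geodesics form a bigon
  obtain ⟨a, b, ha, has, hsb, hbl, hda, hdb, hgap⟩ :=
    (hg.continuousOn.prodMk hh.continuousOn).exists_gap isClosed_diagonal h0 h1
      ⟨hs.1, hs.2.trans hcl⟩ he
  have hga : g a = h a := hda
  have hgb : g b = h b := hdb
  obtain ⟨R, hR, hgR, hhR⟩ := hTG.exists_piece_of_bigon (l := b - a) (l' := b - a)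
    (hg.shift ha (by linarith)) (hh.shift ha (by linarith)) (by linarith) (by linarith)
    (by simpa using hga) (by simpa using hgb) fun r hr r' hr' he' => by
      have hrr' : r = r' := by
        have dg := hg.dist_eq (s := a + r) ⟨by linarith [hr.1], by linarith [hr.2]⟩
        have dh := hh.dist_eq (s := a + r') ⟨by linarith [hr'.1], by linarith [hr'.2]⟩
        rw [h0, he'] at dg
        linarith
      exact hgap (a + r) ⟨by linarith [hr.1], by linarith [hr.2]⟩ (hrr' ▸ he')
  rw [image_comp_const_add_Icc, add_zero, add_sub_cancel] at hgR hhR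
  have hm : a < min b c := lt_min (has.trans hsb) (has.trans_le hs.2)
  have hRQ : R = Q := hTG.eq_of_mem_inter hR hQ
    (hh.injOn.ne ⟨ha, by linarith⟩ ⟨by linarith, (min_le_left _ _).trans hbl⟩ hm.ne)
    ⟨hhR ⟨a, ⟨le_rfl, by linarith⟩, rfl⟩, hhQ ⟨a, ⟨ha, by linarith [hs.2]⟩, rfl⟩⟩
    ⟨hhR ⟨min b c, ⟨hm.le, min_le_left _ _⟩, rfl⟩,
      hhQ ⟨min b c, ⟨by linarith, min_le_right _ _⟩, rfl⟩⟩
  exact hRQ ▸ hgR ⟨s, ⟨has.le, hsb.le⟩, rfl⟩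

theorem exists_piece_of_fork (hTG : IsTreeGraded P) {η β τ : ℝ → F} {lη lβ lτ : ℝ}
    (hη : IsGeodesicOn η 0 lη) (hβ : IsGeodesicOn β 0 lβ) (hτ : IsGeodesicOn τ 0 lτ)
    (hlη : 0 ≤ lη) (hlβ : 0 < lβ) (hlτ : 0 ≤ lτ) (h0 : β 0 = η 0) (hτ0 : τ 0 = η lη)
    (hτ1 : τ lτ = β lβ) (hdisj : ∀ s ∈ Ioc 0 lβ, β s ∉ η '' Icc 0 lη)
    (hτη : ∀ r ∈ Icc 0 lτ, τ r ≠ η 0) :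
    ∃ R ∈ P, ∃ r ∈ Ioc 0 lη, ∃ s ∈ Ioc 0 lβ, η '' Icc 0 r ⊆ R ∧ β '' Icc 0 s ⊆ R := by
  -- `τ` leaves `η` for the last time at `τ s' = η r'`, then first meets `β` at `τ r₂ = β s₂`
  obtain ⟨s', hs', ⟨r', hr', hr's'⟩, hmax⟩ := hτ.continuousOn.exists_greatest_mem_preimage
    (isCompact_Icc.image_of_continuousOn hη.continuousOn).isClosed
    ⟨0, left_mem_Icc.2 hlτ, lη, right_mem_Icc.2 hlη, hτ0.symm⟩
  obtain ⟨s₂, hs₂, ⟨r₂, hr₂, hr₂s₂⟩, hmin⟩ := hβ.continuousOn.exists_least_mem_preimage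
    (isCompact_Icc.image_of_continuousOn (hτ.continuousOn.mono
      (Icc_subset_Icc_left hs'.1))).isClosed
    ⟨lβ, right_mem_Icc.2 hlβ.le, lτ, right_mem_Icc.2 hs'.2, hτ1⟩
  have hr'0 : 0 < r' := hr'.1.lt_of_ne fun h => hτη s' hs' (by rw [← hr's', ← h])
  have hs₂0 : 0 < s₂ := hs₂.1.lt_of_ne fun h =>
    hτη r₂ ⟨hs'.1.trans hr₂.1, hr₂.2⟩ (by rw [hr₂s₂, ← h, h0])
  have hs'r₂ : s' < r₂ := hr₂.1.lt_of_ne fun h =>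
    hdisj s₂ ⟨hs₂0, hs₂.2⟩ ⟨r', hr', by rw [← hr₂s₂, ← h, hr's']⟩
  obtain ⟨R, hR, hηR, hβR, -⟩ := hTG.exists_piece_of_triangle (hη.mono le_rfl hr'.2)
    (hβ.mono le_rfl hs₂.2) (hτ.shift (l' := r₂ - s') hs'.1 (by linarith [hr₂.2])) hr'0.le
    hs₂0.le (by linarith) h0.symm (by simpa using hr's'.symm) (by simpa using hr₂s₂)
    (fun s hs r hr he => hdisj r ⟨hr.1, hr.2.trans hs₂.2⟩ ⟨s, ⟨hs.1, hs.2.le.trans hr'.2⟩, he⟩)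
    (fun v hv s hs he => by
      linarith [hv.1, hmax (s' + v) ⟨by linarith [hs'.1, hv.1], by linarith [hv.2, hr₂.2]⟩
        ⟨s, ⟨hs.1, hs.2.le.trans hr'.2⟩, he.symm⟩])
    (fun v hv r hr he => by
      linarith [hr.2, hmin r ⟨hr.1.le, hr.2.le.trans hs₂.2⟩
        ⟨s' + v, ⟨by linarith [hv.1], by linarith [hv.2, hr₂.2]⟩, he⟩])
  exact ⟨R, hR, r', ⟨hr'0, hr'.2⟩, s₂, ⟨hs₂0, hs₂.2⟩, hηR, hβR⟩

theorem exists_initial_segment_subset (hF : GeodesicSpace F) (hTG : IsTreeGraded P)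
    {Q : Set F} (hQ : Q ∈ P) {η β : ℝ → F} {lη lβ c : ℝ} (hη : IsGeodesicOn η 0 lη)
    (hβ : IsGeodesicOn β 0 lβ) (hlβ : 0 < lβ) (hc : 0 < c) (hcl : c ≤ lη)
    (hηQ : η '' Icc 0 c ⊆ Q) (h0 : β 0 = η 0)
    (hfar : dist (η lη) (β lβ) < dist (η lη) (η 0)) :
    ∃ ε ∈ Ioc 0 lβ, β '' Icc 0 ε ⊆ Q := by
  by_cases hagree : ∃ s ∈ Ioc 0 (min lβ lη), β s = η s
  · obtain ⟨s, hs, hβη⟩ := hagree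
    have hsβ := hs.2.trans (min_le_left _ _)
    refine ⟨min c s, ⟨lt_min hc hs.1, (min_le_right _ _).trans hsβ⟩, ?_⟩
    exact hTG.image_subset_of_same_endpoints (hβ.mono le_rfl hsβ)
      (hη.mono le_rfl (hs.2.trans (min_le_right _ _))) h0 hβη (min_le_right _ _) hQ
      ((image_mono (Icc_subset_Icc_right (min_le_left _ _))).trans hηQ)
  have hdisj : ∀ s ∈ Ioc 0 lβ, β s ∉ η '' Icc 0 lη := by
    rintro s hs ⟨r, hr, he⟩
    have hrs : r = s := by rw [← hη.dist_eq hr, ← hβ.dist_eq ⟨hs.1.le, hs.2⟩, h0, he]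
    subst hrs
    exact hagree ⟨r, ⟨hs.1, le_min hs.2 hr.2⟩, he.symm⟩
  obtain ⟨τ, hτ0, hτ1, hτ⟩ := hF (η lη) (β lβ)
  obtain ⟨R, hR, r, hr, s, hs, hηR, hβR⟩ := hTG.exists_piece_of_fork hη hβ hτ
    (hc.le.trans hcl) hlβ dist_nonneg h0 hτ0 hτ1 hdisj
    fun r hr => hτ.ne_of_lt_dist (by rwa [hτ0]) hr
  have hm : 0 < min r c := lt_min hr.1 hc
  have hRQ : R = Q := hTG.eq_of_mem_inter hR hQ
    (hη.injOn.ne (left_mem_Icc.2 (hc.le.trans hcl)) ⟨hm.le, (min_le_right _ _).trans hcl⟩ hm.ne)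
    ⟨hηR ⟨0, left_mem_Icc.2 hr.1.le, rfl⟩, hηQ ⟨0, left_mem_Icc.2 hc.le, rfl⟩⟩
    ⟨hηR ⟨min r c, ⟨hm.le, min_le_left _ _⟩, rfl⟩, hηQ ⟨min r c, ⟨hm.le, min_le_right _ _⟩, rfl⟩⟩
  exact ⟨s, hs, hRQ ▸ hβR⟩

theorem crossesPieceAt_of_crossesPieceAt (hF : GeodesicSpace F) (hTG : IsTreeGraded P)
    {σ ρ : ℝ → F} {l lρ u u' : ℝ} (hσ : IsGeodesicOn σ 0 l) (hρ : IsGeodesicOn ρ 0 lρ)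
    (hu : u ∈ Ioo 0 l) (hu' : u' ∈ Ioo 0 lρ) (h0 : σ 0 = ρ 0) (hm : σ u = ρ u')
    (hfar : dist (ρ lρ) (σ l) < dist (ρ lρ) (ρ u')) (hcross : CrossesPieceAt P ρ lρ u') :
    CrossesPieceAt P σ l u := by
  obtain ⟨Q, hQ, a, b, ha, hau, hub, hbl, hsub⟩ := hcross
  obtain ⟨ε₁, hε₁, hQ₁⟩ := hTG.exists_initial_segment_subset hF hQ (c := u' - a)
    (hρ.reverse (l' := u') hu'.2.le le_rfl) (hσ.reverse (l' := u) hu.2.le le_rfl) hu.1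
    (by linarith) (by linarith)
    (by
      rw [image_comp_const_sub_Icc, sub_zero, sub_sub_cancel]
      exact (image_mono (Icc_subset_Icc_right hub.le)).trans hsub)
    (by simpa using hm)
    (by simpa [h0, hρ.dist_eq ⟨hu'.1.le, hu'.2.le⟩] using hu'.1)
  obtain ⟨ε₂, hε₂, hQ₂⟩ := hTG.exists_initial_segment_subset hF hQ (c := b - u')
    (hρ.shift (l' := lρ - u') hu'.1.le (by linarith)) (hσ.shift (l' := l - u) hu.1.le (by linarith))
    (by linarith [hu.2]) (by linarith) (by linarith)
    (by
      rw [image_comp_const_add_Icc, add_zero, add_sub_cancel]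
      exact (image_mono (Icc_subset_Icc_left hau.le)).trans hsub)
    (by simpa using hm)
    (by simpa using hfar)
  rw [image_comp_const_sub_Icc, sub_zero] at hQ₁
  rw [image_comp_const_add_Icc, add_zero] at hQ₂
  refine ⟨Q, hQ, u - ε₁, u + ε₂, by linarith [hε₁.2], by linarith [hε₁.1], by linarith [hε₂.1],
    by linarith [hε₂.2], ?_⟩
  rw [← Icc_union_Icc_eq_Icc (b := u) (by linarith [hε₁.1]) (by linarith [hε₂.1]), image_union]
  exact union_subset hQ₁ hQ₂

theorem crossesPieceAt_of_reflTransGen (hF : GeodesicSpace F) (hTG : IsTreeGraded P)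
    {m x y : F} (hxy : ReflTransGen (fun a b => dist a b < dist a m) x y) {σ : ℝ → F} {l u : ℝ}
    (hσ : IsGeodesicOn σ 0 l) (h0 : σ 0 = x) (h1 : σ l = y) (hu : u ∈ Ioo 0 l) (hm : σ u = m) :
    CrossesPieceAt P σ l u := by
  have hl : 0 ≤ l := (hu.1.trans hu.2).le
  induction hxy generalizing σ l u with
  | refl =>
    have := hσ.injOn (left_mem_Icc.2 hl) (right_mem_Icc.2 hl) (h0.trans h1.symm)
    linarith [hu.1, hu.2]
  | @tail b c _ hbc ih =>
    -- `σ`, a geodesic `ρ` from `x` to `b` and the last step `g` from `b` to `y` (which avoids `m`)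
    -- form a triangle; if `m` lies on `ρ`, the induction hypothesis for `ρ` transfers to `σ`
    obtain ⟨ρ, hρ0, hρ1, hρ⟩ := hF x b
    obtain ⟨g, hg0, hg1, hg⟩ := hF b c
    by_cases hmρ : m ∈ ρ '' Icc 0 (dist x b)
    · obtain ⟨u', hu', hρu'⟩ := hmρ
      have hxm : x ≠ m := by
        rw [← h0, ← hm]
        exact hσ.injOn.ne (left_mem_Icc.2 hl) (Ioo_subset_Icc_self hu) hu.1.ne
      have hbm : b ≠ m := fun h => by
        rw [h, dist_self] at hbc
        exact dist_nonneg.not_gt hbc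
      have hu'0 : 0 < u' := hu'.1.lt_of_ne fun h => hxm (by rw [← hρ0, h, hρu'])
      have hu'l : u' < dist x b := hu'.2.lt_of_ne fun h => hbm (by rw [← hρ1, ← h, hρu'])
      exact hTG.crossesPieceAt_of_crossesPieceAt hF hσ hρ hu ⟨hu'0, hu'l⟩ (h0.trans hρ0.symm)
        (hm.trans hρu'.symm) (by rwa [hρ1, h1, hρu'])
        (ih hρ hρ0 hρ1 ⟨hu'0, hu'l⟩ hρu' dist_nonneg)
    · exact hTG.crossesPieceAt_of_not_mem_union hσ hρ hg dist_nonneg dist_nonneg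
        (hρ0.trans h0.symm) (hρ1.trans hg0.symm) (hg1.trans h1.symm) hu (by rwa [hm])
        (by rw [hm]; exact fun ⟨r, hr, he⟩ => hg.ne_of_lt_dist (by rwa [hg0]) hr he)

theorem mem_of_not_crossesPieceAt (hF : GeodesicSpace F) (hTG : IsTreeGraded P) {F' : Set F}
    (hF' : IsPreconnected F') {σ : ℝ → F} {l u : ℝ} (hσ : IsGeodesicOn σ 0 l)
    (h0 : σ 0 ∈ closure F') (h1 : σ l ∈ closure F') (hu : u ∈ Ioo 0 l)
    (hnot : ¬ CrossesPieceAt P σ l u) : σ u ∈ F' := by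
  by_contra huF
  have hl : 0 ≤ l := (hu.1.trans hu.2).le
  have hS : IsPreconnected (insert (σ 0) (insert (σ l) F')) := hF'.subset_closure
    ((subset_insert _ _).trans (subset_insert _ _))
    (insert_subset h0 (insert_subset h1 subset_closure))
  have hmS : σ u ∉ insert (σ 0) (insert (σ l) F') := by
    rintro (h | h | h)
    · exact hu.1.ne' (hσ.injOn (Ioo_subset_Icc_self hu) (left_mem_Icc.2 hl) h)
    · exact hu.2.ne (hσ.injOn (Ioo_subset_Icc_self hu) (right_mem_Icc.2 hl) h)
    · exact huF h
  exact hnot (hTG.crossesPieceAt_of_reflTransGen hF (reflTransGen_dist_lt_of_isPreconnected hS hmS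
    (mem_insert _ _) (mem_insert_of_mem _ (mem_insert _ _))) hσ rfl rfl hu rfl)

theorem exists_left_end (hTG : IsTreeGraded P) {Q : Set F} (hQ : Q ∈ P) {σ : ℝ → F} {l : ℝ}
    (hσ : IsGeodesicOn σ 0 l) {v w : ℝ} (hv : 0 ≤ v) (hvw : v < w) (hwl : w ≤ l)
    (hsub : σ '' Icc v w ⊆ Q) :
    ∃ a ∈ Icc 0 v, σ '' Icc a w ⊆ Q ∧ ¬ CrossesPieceAt P σ l a := by
  set A := {a ∈ Icc 0 v | σ '' Icc a w ⊆ Q}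
  have hvA : v ∈ A := ⟨right_mem_Icc.2 hv, hsub⟩
  have hbdd : BddBelow A := ⟨0, fun a ha => ha.1.1⟩
  have ha : sInf A ∈ Icc 0 v := ⟨le_csInf ⟨v, hvA⟩ fun r hr => hr.1.1, csInf_le hbdd hvA⟩
  have haw : sInf A < w := ha.2.trans_lt hvw
  have hopen : σ '' Ioc (sInf A) w ⊆ Q := by
    rintro _ ⟨s, hs, rfl⟩
    obtain ⟨a', ha', ha's⟩ := exists_lt_of_csInf_lt ⟨v, hvA⟩ hs.1
    exact ha'.2 ⟨s, ⟨ha's.le, hs.2⟩, rfl⟩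
  have hclosed : σ '' Icc (sInf A) w ⊆ Q := by
    rw [← closure_Ioc haw.ne]
    refine (ContinuousOn.image_closure (hσ.continuousOn.mono ?_)).trans
      ((hTG.pieces_closed Q hQ).closure_subset_iff.2 hopen)
    rw [closure_Ioc haw.ne]
    exact Icc_subset_Icc ha.1 hwl
  refine ⟨sInf A, ha, hclosed, fun ⟨Q', hQ', a', b', ha', ha'a, hab', hb'l, hsub'⟩ => ?_⟩
  -- a piece through `σ (sInf A)` is `Q` itself, so `Q` would contain `σ [a', w]`
  have hm : sInf A < min b' w := lt_min hab' haw
  have hQQ : Q' = Q := hTG.eq_of_mem_inter hQ' hQ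
    (hσ.injOn.ne ⟨ha.1, haw.le.trans hwl⟩ ⟨ha.1.trans hm.le, (min_le_right _ _).trans hwl⟩ hm.ne)
    ⟨hsub' ⟨_, ⟨ha'a.le, hab'.le⟩, rfl⟩, hclosed ⟨_, ⟨le_rfl, haw.le⟩, rfl⟩⟩
    ⟨hsub' ⟨_, ⟨by linarith, min_le_left _ _⟩, rfl⟩, hclosed ⟨_, ⟨hm.le, min_le_right _ _⟩, rfl⟩⟩
  have ha'A : a' ∈ A := by
    refine ⟨⟨ha', by linarith [ha.2]⟩, ?_⟩
    rintro _ ⟨s, hs, rfl⟩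
    rcases le_total s b' with h | h
    · exact hQQ ▸ hsub' ⟨s, ⟨hs.1, h⟩, rfl⟩
    · exact hclosed ⟨s, ⟨by linarith, hs.2⟩, rfl⟩
  linarith [csInf_le hbdd ha'A]

theorem exists_right_end (hTG : IsTreeGraded P) {Q : Set F} (hQ : Q ∈ P) {σ : ℝ → F} {l : ℝ}
    (hσ : IsGeodesicOn σ 0 l) {a w : ℝ} (ha : 0 ≤ a) (haw : a < w) (hwl : w ≤ l)
    (hsub : σ '' Icc a w ⊆ Q) :
    ∃ b ∈ Icc w l, σ '' Icc a b ⊆ Q ∧ ¬ CrossesPieceAt P σ l b := by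
  obtain ⟨a', ha', hsub', hnot⟩ := hTG.exists_left_end hQ (hσ.reverse le_rfl le_rfl)
    (v := l - w) (w := l - a) (by linarith) (by linarith) (by linarith)
    (by rwa [image_comp_const_sub_Icc, sub_sub_cancel, sub_sub_cancel])
  refine ⟨l - a', ⟨by linarith [ha'.2], by linarith [ha'.1]⟩, ?_, fun h => hnot ?_⟩
  · rwa [image_comp_const_sub_Icc, sub_sub_cancel] at hsub'
  · simpa using h.reverse

end IsTreeGraded

namespace IsQSubtree

variable {P : Set (Set F)} {F' : Set F}

theorem mem_or_exists_piece (hF : GeodesicSpace F) (hTG : IsTreeGraded P)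
    (hF' : IsQSubtree P F') {σ : ℝ → F} {l u : ℝ} (hσ : IsGeodesicOn σ 0 l) (h0 : σ 0 ∈ F')
    (h1 : σ l ∈ closure F') (hu : u ∈ Ioo 0 l) :
    σ u ∈ F' ∨ ∃ Q ∈ P, σ u ∈ Q ∧ σ l ∈ Q ∧ ∃ e ∈ F' ∩ Q, e ≠ σ l := by
  have hpre := hF'.1.isConnected.isPreconnected
  have hend : ∀ s ∈ Ico 0 l, ¬ CrossesPieceAt P σ l s → σ s ∈ F' := fun s hs hns => by
    rcases hs.1.eq_or_lt with rfl | hs0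
    · exact h0
    · exact hTG.mem_of_not_crossesPieceAt hF hpre hσ (subset_closure h0) h1 ⟨hs0, hs.2⟩ hns
  by_cases hcross : CrossesPieceAt P σ l u
  swap
  · exact Or.inl (hend u ⟨hu.1.le, hu.2⟩ hcross)
  -- the ends of a maximal piece segment `σ [a, b]` through `σ u` lie in `F'`, unless `b = l`
  obtain ⟨Q, hQ, v, w, hv, hvu, huw, hwl, hsub⟩ := hcross
  obtain ⟨a, ha, haw, hna⟩ := hTG.exists_left_end hQ hσ hv (hvu.trans huw) hwl hsub
  obtain ⟨b, hb, hab, hnb⟩ := hTG.exists_right_end hQ hσ ha.1 (by linarith [ha.2]) hwl haw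
  have haF : σ a ∈ F' := hend a ⟨ha.1, by linarith [ha.2]⟩ hna
  have hne : σ a ≠ σ b := hσ.injOn.ne ⟨ha.1, by linarith [ha.2]⟩ ⟨by linarith [hb.1], hb.2⟩
    (by linarith [hb.1, ha.2])
  have haQ : σ a ∈ Q := hab ⟨a, ⟨le_rfl, by linarith [ha.2, hb.1]⟩, rfl⟩
  have hbQ : σ b ∈ Q := hab ⟨b, ⟨by linarith [ha.2, hb.1], le_rfl⟩, rfl⟩
  have huQ : σ u ∈ Q := hab ⟨u, ⟨by linarith [ha.2], by linarith [hb.1]⟩, rfl⟩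
  rcases hb.2.eq_or_lt with rfl | hbl
  · exact Or.inr ⟨Q, hQ, huQ, hbQ, σ a, ⟨haF, haQ⟩, hne⟩
  · exact Or.inl (hF'.2 Q hQ ⟨σ a, ⟨haQ, haF⟩, σ b,
      ⟨hbQ, hend b ⟨by linarith [hb.1, hv], hbl⟩ hnb⟩, hne⟩ huQ)

theorem image_subset (hF : GeodesicSpace F) (hTG : IsTreeGraded P) (hF' : IsQSubtree P F')
    {σ : ℝ → F} {l : ℝ} (hσ : IsGeodesicOn σ 0 l) (h0 : σ 0 ∈ F') (h1 : σ l ∈ F') :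
    σ '' Icc 0 l ⊆ F' := by
  rintro _ ⟨s, hs, rfl⟩
  rcases hs.1.eq_or_lt with rfl | hs0
  · exact h0
  rcases hs.2.eq_or_lt with rfl | hsl
  · exact h1
  rcases hF'.mem_or_exists_piece hF hTG hσ h0 (subset_closure h1) ⟨hs0, hsl⟩ with
    h | ⟨Q, hQ, hsQ, hlQ, e, ⟨heF, heQ⟩, he⟩
  · exact h
  · exact hF'.2 Q hQ ⟨e, ⟨heQ, heF⟩, σ l, ⟨hlQ, h1⟩, he⟩ hsQ

theorem disjoint_of_mem_closure (hF : GeodesicSpace F) (hTG : IsTreeGraded P)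
    (hF' : IsQSubtree P F') {t : F} (ht : t ∈ closure F') (htF : t ∉ F') {q : Set F}
    (hq : q ∈ P) (htq : t ∈ q) : Disjoint q F' := by
  rw [disjoint_left]
  intro e heq heF
  have het : 0 < dist t e := dist_pos.2 fun h => htF (h ▸ heF)
  obtain ⟨y, hyF, hty⟩ := Metric.mem_closure_iff.1 ht _ het
  have hye : 0 < dist y e := dist_pos.2 fun h => (h ▸ hty).false
  obtain ⟨η, hη0, hη1, hη, hηq⟩ := hTG.pieces_geodesic q hq e heq t htq
  obtain ⟨ρ, hρ0, hρ1, hρ⟩ := hF y e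
  have hρF := hF'.image_subset hF hTG hρ (by rwa [hρ0]) (by rwa [hρ1])
  -- the geodesic from `e` back to `y` enters `q`, which then meets `F'` in two points
  obtain ⟨ε, hε, hεq⟩ := hTG.exists_initial_segment_subset hF hq hη
    (hρ.reverse le_rfl le_rfl) hye (by rwa [dist_comm]) le_rfl hηq
    (by simp [hρ1, hη0]) (by simpa [hη0, hη1, hρ0, dist_comm t] using hty)
  have hne : ρ (dist y e - ε) ≠ e := fun h => by
    have := hρ.injOn ⟨by linarith [hε.2], by linarith [hε.1]⟩ (right_mem_Icc.2 hye.le)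
      (h.trans hρ1.symm)
    linarith [hε.1]
  exact htF (hF'.2 q hq ⟨_, ⟨hεq ⟨ε, ⟨hε.1.le, le_rfl⟩, rfl⟩,
    hρF ⟨_, ⟨by linarith [hε.2], by linarith [hε.1]⟩, rfl⟩⟩, e, ⟨heq, heF⟩, hne⟩ htq)

theorem union_singleton (hF : GeodesicSpace F) (hTG : IsTreeGraded P) (hF' : IsQSubtree P F')
    {t : F} (ht : t ∈ closure F') (hdisj : ∀ q ∈ P, t ∈ q → Disjoint q F') :
    IsQSubtree P (F' ∪ {t}) := by
  obtain ⟨x, hx, hjoin⟩ := hF'.1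
  obtain ⟨γ, h0, h1, hγ⟩ := hF x t
  have hγ' : γ '' Icc 0 (dist x t) ⊆ F' ∪ {t} := by
    rintro _ ⟨s, hs, rfl⟩
    rcases hs.1.eq_or_lt with rfl | hs0
    · exact Or.inl (h0 ▸ hx)
    rcases hs.2.eq_or_lt with rfl | hsl
    · exact Or.inr h1
    rcases hF'.mem_or_exists_piece hF hTG hγ (by rwa [h0]) (by rwa [h1]) ⟨hs0, hsl⟩ with
      h | ⟨Q, hQ, -, htQ, e, ⟨heF, heQ⟩, -⟩
    · exact Or.inl h
    · exact ((hdisj Q hQ (by rwa [h1] at htQ)).notMem_of_mem_left heQ heF).elim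
  have hxt : JoinedIn (F' ∪ {t}) x t := by
    simpa only [h0, h1] using hγ.joinedIn dist_nonneg hγ'
  refine ⟨⟨x, Or.inl hx, fun y hy => ?_⟩, ?_⟩
  · rcases hy with hy | rfl
    · exact (hjoin hy).mono subset_union_left
    · exact hxt
  rintro p hp ⟨a, ⟨hap, ha⟩, b, ⟨hbp, hb⟩, hab⟩
  by_cases htp : t ∈ p
  · have hpF := disjoint_left.1 (hdisj p hp htp)
    rcases ha with ha | rfl
    · exact (hpF hap ha).elim
    rcases hb with hb | rfl
    · exact (hpF hbp hb).elim
    · exact (hab rfl).elim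
  · have hpF : ∀ z ∈ p, z ∈ F' ∪ {t} → z ∈ F' := fun z hz hz' =>
      hz'.resolve_right fun (h : z = t) => htp (h ▸ hz)
    exact (hF'.2 p hp ⟨a, ⟨hap, hpF a hap ha⟩, b, ⟨hbp, hpF b hbp hb⟩, hab⟩).trans
      subset_union_left

end IsQSubtree

theorem TypeI.mono {F' F'' : Set F} {s : F} (h : TypeI F' s) (hsub : F' ⊆ F'') : TypeI F'' s :=
  fun C hC => (h C hC).mono (inter_subset_inter_left C hsub)

theorem TypeII.union_singleton [LocallyConnectedSpace F] {P : Set (Set F)} {F' : Set F}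
    {s t : F} (h : TypeII P F' s) (ht : t ∈ closure F') (hst : ∀ p ∈ P, t ∈ p → s ∉ p) :
    TypeII P (F' ∪ {t}) s := by
  refine ⟨le_trans (encard_mono ?_) h.1, le_trans (encard_mono ?_) h.2⟩
  · rintro C ⟨hC, hnl, w, hw, hwC⟩
    refine ⟨hC, hnl, ?_⟩
    rcases hw with hw | rfl
    · exact ⟨w, hw, hwC⟩
    obtain ⟨y, -, rfl⟩ := hC
    obtain ⟨z, hzC, hzF⟩ := _root_.mem_closure_iff.1 ht _
      isOpen_compl_singleton.connectedComponentIn hwC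
    exact ⟨z, hzF, hzC⟩
  · rintro p ⟨hp, hsp, z, ⟨hz, hzp⟩, hzs⟩
    rcases hz with hz | rfl
    · exact ⟨hp, hsp, z, ⟨hz, hzp⟩, hzs⟩
    · exact (hst p hp hzp hsp).elim

theorem typeII_union_singleton_self {P : Set (Set F)} {F' : Set F} (hF' : IsPreconnected F')
    {t : F} (htF : t ∉ F') (hdisj : ∀ q ∈ P, t ∈ q → Disjoint q F') : TypeII P (F' ∪ {t}) t := by
  refine ⟨le_trans (encard_le_one_iff.2 ?_) one_le_two, ?_⟩
  · rintro _ _ ⟨⟨y, -, rfl⟩, -, w, hw, hwC⟩ ⟨⟨y', -, rfl⟩, -, w', hw', hw'C⟩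
    have hmem : ∀ {v y : F}, v ∈ F' ∪ {t} → v ∈ connectedComponentIn {t}ᶜ y → v ∈ F' :=
      fun hv hvC => hv.resolve_right (connectedComponentIn_subset _ _ hvC)
    have hww' : w' ∈ connectedComponentIn {t}ᶜ w := hF'.subset_connectedComponentIn
      (hmem hw hwC) (fun v hv (h : v = t) => htF (h ▸ hv)) (hmem hw' hw'C)
    rw [connectedComponentIn_eq hwC, connectedComponentIn_eq hw'C, connectedComponentIn_eq hww']
  · have : {p | p ∈ P ∧ t ∈ p ∧ ∃ z ∈ (F' ∪ {t}) ∩ p, z ≠ t} = ∅ :=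
      eq_empty_of_forall_notMem fun p ⟨hp, htp, z, ⟨hz, hzp⟩, hzt⟩ =>
        hz.elim (disjoint_left.1 (hdisj p hp htp) hzp) hzt
    rw [this, encard_empty]
    exact zero_le

end TreeGraded

theorem stmt_14_general {F : Type*} [MetricSpace F] (hF : GeodesicSpace F)
    (P : Set (Set F)) (hTG : IsTreeGraded P) (F' : Set F)
    (hgood : IsGoodQSubtree P F') (t : F) (ht : t ∈ closure F') :
    IsGoodQSubtree P (F' ∪ {t}) := by
  by_cases htF : t ∈ F'
  · rwa [union_eq_self_of_subset_right (singleton_subset_iff.2 htF)]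
  obtain ⟨hF', htype⟩ := hgood
  have := locallyPathConnectedSpace_of_geodesicSpace hF
  have hdisj : ∀ q ∈ P, t ∈ q → Disjoint q F' := fun q hq htq =>
    hF'.disjoint_of_mem_closure hF hTG ht htF hq htq
  refine ⟨hF'.union_singleton hF hTG ht hdisj, ?_⟩
  rintro s (hs | rfl)
  · exact (htype s hs).imp (·.mono subset_union_left) fun h => h.union_singleton ht
      fun p hp htp hsp => disjoint_left.1 (hdisj p hp htp) hsp hs
  · exact Or.inr (typeII_union_singleton_self hF'.1.isConnected.isPreconnected htF hdisj)

/-- if `F'` is a good `Q`-subtree of a tree-graded space `F` and `t` lies in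
the closure of `F'`, then `F' ∪ {t}` is a good `Q`-subtree as well. -/
theorem stmt_14 {F : Type*} [MetricSpace F] [CompleteSpace F] (hF : GeodesicSpace F)
    (P : Set (Set F)) (hTG : IsTreeGraded P) (F' : Set F)
    (hgood : IsGoodQSubtree P F') (t : F) (ht : t ∈ closure F') :
    IsGoodQSubtree P (F' ∪ {t}) :=
  stmt_14_general hF P hTG F' hgood t ht
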